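/- arXiv:2505.05866 — 2 statements merged into one kernel-verified Lean document; each statement's English description precedes it below -/
import Mathlib

section
/- The rule set 𝔍_p is sound and complete for the (PIA, PIA*)-implication problem, where PIA* is the class of possible independence atoms X⊥_p Y such that |X| = 1 or |Y| = 1, or ||X| − |Y|| ≤ 1. That is: 𝔍_p is sound for all PIAs, and for every finite set Σ of PIAs and every PIA σ = X⊥_p Y in the class PIA* over a relation schema R, Σ ⊨ σ if and only if Σ ⊢_{𝔍_p} σ. -/
/-- A relation schema over a finite attribute type `Attr`: each attribute has a
domain with a distinguished null symbol `*` and at least two non-null values. -/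
structure Schema (Attr : Type) where
  Dom : Attr → Type
  null : ∀ A, Dom A
  two_nonnull : ∀ A, ∃ x y : Dom A, x ≠ null A ∧ y ≠ null A ∧ x ≠ y

variable {Attr : Type} [DecidableEq Attr]

/-- A tuple over the schema: a choice of a domain value for each attribute. -/
abbrev Tuple (S : Schema Attr) : Type := ∀ A, S.Dom A

/-- A relation: a finite multiset of tuples. -/
abbrev DBRel (S : Schema Attr) : Type := Multiset (Tuple S)

/-- `t` is non-null on every attribute of `X` (i.e. the projection of `t` on `X` is complete). -/
def completeOn (S : Schema Attr) (X : Finset Attr) (t : Tuple S) : Prop :=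
  ∀ A ∈ X, t A ≠ S.null A

/-- `t` and `t'` agree on all attributes of `X` (i.e. `t(X) = t'(X)`). -/
def agreeOn (S : Schema Attr) (X : Finset Attr) (t t' : Tuple S) : Prop :=
  ∀ A ∈ X, t A = t' A

/-- `r` satisfies the independence atom `X ⊥ Y`. -/
def satIA (S : Schema Attr) (r : DBRel S) (X Y : Finset Attr) : Prop :=
  (∀ t ∈ r, completeOn S (X ∪ Y) t) ∧
    ∀ t1 ∈ r, ∀ t2 ∈ r, ∃ t ∈ r, agreeOn S X t t1 ∧ agreeOn S Y t t2

/-- `t'` is a grounding of `t`: a complete tuple agreeing with `t` on its non-null entries. -/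
def groundsTuple (S : Schema Attr) (t' t : Tuple S) : Prop :=
  (∀ A, t' A ≠ S.null A) ∧ ∀ A, t A ≠ S.null A → t' A = t A

/-- `r'` is a grounding of `r`: each copy of each tuple is grounded independently. -/
def grounds (S : Schema Attr) (r' r : DBRel S) : Prop :=
  Multiset.Rel (groundsTuple S) r' r

/-- `r` satisfies the possible independence atom `X ⊥ₚ Y`. -/
def satPIA (S : Schema Attr) (r : DBRel S) (X Y : Finset Attr) : Prop :=
  ∃ r', grounds S r' r ∧ satIA S r' X Y

/-- `r` satisfies the certain independence atom `X ⊥_c Y`. -/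
def satCIA (S : Schema Attr) (r : DBRel S) (X Y : Finset Attr) : Prop :=
  ∀ r', grounds S r' r → satIA S r' X Y

/-- `Γ ⊨ X ⊥ₚ Y`: logical implication for possible independence atoms
(atoms coded as pairs `(X, Y)`). -/
def impliesPIA (S : Schema Attr) (Γ : Finset (Finset Attr × Finset Attr))
    (X Y : Finset Attr) : Prop :=
  ∀ r : DBRel S, (∀ p ∈ Γ, satPIA S r p.1 p.2) → satPIA S r X Y

/-- Deducibility of possible independence atoms from `Γ` via the rule set 𝔍_p:
trivial independence, symmetry, constancy, and decomposition (no exchange). -/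
inductive DerivPIA (Γ : Finset (Finset Attr × Finset Attr)) :
    Finset Attr → Finset Attr → Prop where
  | mem : ∀ X Y, (X, Y) ∈ Γ → DerivPIA Γ X Y
  | triv : ∀ X, DerivPIA Γ X ∅
  | symm : ∀ X Y, DerivPIA Γ X Y → DerivPIA Γ Y X
  | const : ∀ X Y Z, DerivPIA Γ X X → DerivPIA Γ Y Z → DerivPIA Γ (X ∪ Y) Z
  | decomp : ∀ X Y Z, DerivPIA Γ X (Y ∪ Z) → DerivPIA Γ X Y

/-- Membership in the class PIA*: `|X| = 1` or `|Y| = 1`, or `||X| - |Y|| ≤ 1`. -/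
def PIAstar (X Y : Finset Attr) : Prop :=
  X.card = 1 ∨ Y.card = 1 ∨ |(X.card : ℤ) - (Y.card : ℤ)| ≤ 1

/-!
Soundness is checked rule by rule. The constancy rule is sound because `X ⊥ₚ X` forces every
column in `X` to carry at most one non-null value, so overwriting the `X`-columns of a grounding
by these values preserves both the grounding and any independence of other columns.

For completeness let `C` be the set of attributes occurring on both sides of an atom of `Γ`; the
rules derive `C ⊥ₚ C`, and hence `X ⊥ₚ Y` as soon as `X \ C` or `Y \ C` is empty or
`(X \ C, Y \ C)` fits inside an atom of `Γ` up to symmetry. Otherwise there is a counterexample.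
If some `A` lies in both `X \ C` and `Y \ C`, take two complete tuples differing only at `A`.
If `g₁ = X \ C` and `g₂ = Y \ C` are disjoint, take the complete tuples that are `1` (`val₁`)
exactly on `g₁`, resp. on `g₂`, and `0` (`val₀`) elsewhere, together with wildcard tuples, null
except for a `0` at one attribute of `g₁ ∪ g₂`. An atom `U ⊥ₚ V` of `Γ` needs the tuples that
look like `g₁` on `U` and like `g₂` on `V` (and vice versa); since `(g₁, g₂)` does not fit inside
`(U, V)`, these have a `0` on `g₁ ∪ g₂` and can be grounded from wildcards. The tuple `X ⊥ Y`
asks for is `1` on all of `g₁ ∪ g₂`, and no tuple can be grounded to it.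
-/

namespace Schema

variable {Attr : Type} (S : Schema Attr)

noncomputable def val₀ (A : Attr) : S.Dom A := (S.two_nonnull A).choose

noncomputable def val₁ (A : Attr) : S.Dom A := (S.two_nonnull A).choose_spec.choose

theorem val₀_ne_null (A : Attr) : S.val₀ A ≠ S.null A :=
  (S.two_nonnull A).choose_spec.choose_spec.1

theorem val₁_ne_null (A : Attr) : S.val₁ A ≠ S.null A :=
  (S.two_nonnull A).choose_spec.choose_spec.2.1

theorem val₀_ne_val₁ (A : Attr) : S.val₀ A ≠ S.val₁ A :=
  (S.two_nonnull A).choose_spec.choose_spec.2.2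

end Schema

section Grounding

variable {Attr : Type} {S : Schema Attr} {t t' : Tuple S} {r r' : DBRel S}

theorem groundsTuple_self (ht : ∀ A, t A ≠ S.null A) : groundsTuple S t t :=
  ⟨ht, fun _ _ => rfl⟩

theorem eq_of_groundsTuple (h : groundsTuple S t' t) (ht : ∀ A, t A ≠ S.null A) : t' = t :=
  funext fun A => h.2 A (ht A)

theorem grounds_self (hr : ∀ t ∈ r, ∀ A, t A ≠ S.null A) : grounds S r r :=
  Multiset.rel_refl_of_refl_on fun t ht => groundsTuple_self (hr t ht)

theorem eq_of_grounds (h : grounds S r' r) (hr : ∀ t ∈ r, ∀ A, t A ≠ S.null A) : r' = r :=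
  Multiset.rel_eq.1 (h.mono fun _ _ _ hb hg => eq_of_groundsTuple hg (hr _ hb))

theorem exists_groundsTuple_of_grounds (h : grounds S r' r) (ht : t ∈ r) :
    ∃ t' ∈ r', groundsTuple S t' t :=
  Multiset.exists_mem_of_rel_of_mem (Multiset.rel_flip.2 h) ht

theorem mem_of_grounds (h : grounds S r' r) (ht : t ∈ r) (hc : ∀ A, t A ≠ S.null A) : t ∈ r' := by
  obtain ⟨t', ht', hg⟩ := exists_groundsTuple_of_grounds h ht
  rwa [← eq_of_groundsTuple hg hc]

theorem exists_grounds (r : DBRel S) : ∃ r', grounds S r' r ∧ ∀ t ∈ r', ∀ A, t A ≠ S.null A := by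
  classical
  let fill : Tuple S → Tuple S := fun t A => if t A = S.null A then S.val₀ A else t A
  have hfill : ∀ t A, fill t A ≠ S.null A := fun t A => by
    by_cases h : t A = S.null A <;> simp [fill, h, S.val₀_ne_null]
  refine ⟨r.map fill, Multiset.rel_map_left.2 (Multiset.rel_refl_of_refl_on fun t _ => ?_), ?_⟩
  · exact ⟨hfill t, fun A hA => if_neg hA⟩
  · simpa only [Multiset.forall_mem_map_iff] using fun t _ => hfill t

end Grounding

section Satisfaction

variable {Attr : Type} [DecidableEq Attr] {S : Schema Attr} {r : DBRel S} {X Y Z : Finset Attr}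

theorem satIA_symm (h : satIA S r X Y) : satIA S r Y X := by
  refine ⟨fun t ht A hA => h.1 t ht A (by rwa [Finset.union_comm]), fun t₁ h₁ t₂ h₂ => ?_⟩
  obtain ⟨t, ht, hX, hY⟩ := h.2 t₂ h₂ t₁ h₁
  exact ⟨t, ht, hY, hX⟩

theorem satIA_mono {X' Y' : Finset Attr} (h : satIA S r X Y) (hX : X' ⊆ X) (hY : Y' ⊆ Y) :
    satIA S r X' Y' := by
  refine ⟨fun t ht A hA => h.1 t ht A (Finset.union_subset_union hX hY hA), fun t₁ h₁ t₂ h₂ => ?_⟩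
  obtain ⟨t, ht, hX', hY'⟩ := h.2 t₁ h₁ t₂ h₂
  exact ⟨t, ht, fun A hA => hX' A (hX hA), fun A hA => hY' A (hY hA)⟩

theorem satPIA_symm (h : satPIA S r X Y) : satPIA S r Y X :=
  let ⟨r', hg, hs⟩ := h
  ⟨r', hg, satIA_symm hs⟩

theorem satPIA_mono {X' Y' : Finset Attr} (h : satPIA S r X Y) (hX : X' ⊆ X) (hY : Y' ⊆ Y) :
    satPIA S r X' Y' :=
  let ⟨r', hg, hs⟩ := h
  ⟨r', hg, satIA_mono hs hX hY⟩

theorem satPIA_empty_right (r : DBRel S) (X : Finset Attr) : satPIA S r X ∅ := by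
  obtain ⟨r', hg, hc⟩ := exists_grounds r
  refine ⟨r', hg, fun t ht A _ => hc t ht A, fun t₁ h₁ _ _ => ⟨t₁, h₁, fun _ _ => rfl, ?_⟩⟩
  simp [agreeOn]

theorem satPIA_iff_satIA_of_complete (hr : ∀ t ∈ r, ∀ A, t A ≠ S.null A) :
    satPIA S r X Y ↔ satIA S r X Y :=
  ⟨fun ⟨_, hg, hs⟩ => eq_of_grounds hg hr ▸ hs, fun hs => ⟨r, grounds_self hr, hs⟩⟩

theorem exists_const_of_satPIA_self (h : satPIA S r X X) :
    ∃ c : Tuple S, completeOn S X c ∧ ∀ t ∈ r, ∀ A ∈ X, t A ≠ S.null A → t A = c A := by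
  obtain ⟨r₁, hg, hcomp, hcross⟩ := h
  rcases Multiset.empty_or_exists_mem r₁ with rfl | ⟨u, hu⟩
  · obtain rfl : r = 0 := Multiset.rel_zero_left.1 hg
    exact ⟨S.val₀, fun A _ => S.val₀_ne_null A, by simp⟩
  refine ⟨u, fun A hA => hcomp u hu A (Finset.mem_union_left _ hA), fun t ht A hA hne => ?_⟩
  obtain ⟨t₁, ht₁, hgt⟩ := exists_groundsTuple_of_grounds hg ht
  obtain ⟨w, -, hwt, hwu⟩ := hcross t₁ ht₁ u hu
  rw [← hgt.2 A hne, ← hwt A hA, hwu A hA]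

theorem agreeOn_piecewise {W : Finset Attr} {c t t' : Tuple S} (h : agreeOn S W t t') :
    agreeOn S (X ∪ W) (X.piecewise c t) (X.piecewise c t') := fun A hA => by
  by_cases hX : A ∈ X
  · simp only [Finset.piecewise_eq_of_mem _ _ _ hX]
  · simp only [Finset.piecewise_eq_of_notMem _ _ _ hX]
    exact h A ((Finset.mem_union.1 hA).resolve_left hX)

theorem satPIA_union_of_satPIA_self (hX : satPIA S r X X) (hYZ : satPIA S r Y Z) :
    satPIA S r (X ∪ Y) Z := by
  obtain ⟨c, hc, hrc⟩ := exists_const_of_satPIA_self hX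
  obtain ⟨r₂, hg, hcomp, hcross⟩ := hYZ
  refine ⟨r₂.map fun t => X.piecewise c t, ?_, ?_, ?_⟩
  · refine Multiset.rel_map_left.2 (hg.mono fun t' _ t ht h => ⟨fun A => ?_, fun A hA => ?_⟩)
    all_goals by_cases hAX : A ∈ X
    · simpa [hAX] using hc A hAX
    · simpa [hAX] using h.1 A
    · simpa [hAX] using (hrc t ht A hAX hA).symm
    · simpa [hAX] using h.2 A hA
  · simp only [Multiset.forall_mem_map_iff]
    intro t ht A hA
    by_cases hAX : A ∈ X
    · simpa [hAX] using hc A hAX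
    · simpa [hAX] using hcomp t ht A (by simp_all)
  · simp only [Multiset.forall_mem_map_iff]
    intro t₁ h₁ t₂ h₂
    obtain ⟨w, hw, hw₁, hw₂⟩ := hcross t₁ h₁ t₂ h₂
    exact ⟨_, Multiset.mem_map_of_mem _ hw, agreeOn_piecewise hw₁,
      fun A hA => agreeOn_piecewise hw₂ A (Finset.mem_union_right _ hA)⟩

theorem impliesPIA_of_derivPIA {Γ : Finset (Finset Attr × Finset Attr)}
    (h : DerivPIA Γ X Y) : impliesPIA S Γ X Y := by
  induction h with
  | mem X Y h => exact fun r hr => hr (X, Y) h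
  | triv X => exact fun r _ => satPIA_empty_right r X
  | symm _ _ _ ih => exact fun r hr => satPIA_symm (ih r hr)
  | const _ _ _ _ _ ihX ihYZ => exact fun r hr => satPIA_union_of_satPIA_self (ihX r hr) (ihYZ r hr)
  | decomp _ _ _ _ ih => exact fun r hr => satPIA_mono (ih r hr) subset_rfl Finset.subset_union_left

end Satisfaction

section Derivation

variable {Attr : Type} [DecidableEq Attr] {Γ : Finset (Finset Attr × Finset Attr)}
  {X Y : Finset Attr}

/-- The attributes that `Γ` forces to be quasi-constant. -/
def constAttrs (Γ : Finset (Finset Attr × Finset Attr)) : Finset Attr :=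
  Γ.biUnion fun p => p.1 ∩ p.2

theorem inter_subset_constAttrs {p : Finset Attr × Finset Attr} (hp : p ∈ Γ) :
    p.1 ∩ p.2 ⊆ constAttrs Γ :=
  Finset.subset_biUnion_of_mem (fun p => p.1 ∩ p.2) hp

namespace DerivPIA

theorem mono_right {Y' : Finset Attr} (h : DerivPIA Γ X Y) (hY : Y' ⊆ Y) : DerivPIA Γ X Y' :=
  decomp X Y' Y (by rwa [Finset.union_eq_right.2 hY])

theorem mono_left {X' : Finset Attr} (h : DerivPIA Γ X Y) (hX : X' ⊆ X) : DerivPIA Γ X' Y :=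
  symm _ _ ((symm _ _ h).mono_right hX)

theorem of_subset_mem {p : Finset Attr × Finset Attr} (hp : p ∈ Γ) (hX : X ⊆ p.1)
    (hY : Y ⊆ p.2) : DerivPIA Γ X Y :=
  ((mem p.1 p.2 hp).mono_right hY).mono_left hX

theorem union_self (hX : DerivPIA Γ X X) (hY : DerivPIA Γ Y Y) : DerivPIA Γ (X ∪ Y) (X ∪ Y) :=
  const X Y _ hX (symm _ _ (const X Y Y hX hY))

theorem constAttrs_self : DerivPIA Γ (constAttrs Γ) (constAttrs Γ) := by
  suffices ∀ Δ ⊆ Γ, DerivPIA Γ (constAttrs Δ) (constAttrs Δ) from this Γ subset_rfl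
  intro Δ
  induction Δ using Finset.induction_on with
  | empty => exact fun _ => triv ∅
  | insert p Δ _ ih =>
    intro hΔ
    rw [constAttrs, Finset.biUnion_insert]
    exact union_self (of_subset_mem (hΔ (Finset.mem_insert_self p Δ)) Finset.inter_subset_left
      Finset.inter_subset_right) (ih ((Finset.subset_insert p Δ).trans hΔ))

theorem of_sdiff_constAttrs
    (h : DerivPIA Γ (X \ constAttrs Γ) (Y \ constAttrs Γ)) : DerivPIA Γ X Y := by
  have hC : ∀ T, DerivPIA Γ (T ∩ constAttrs Γ) (T ∩ constAttrs Γ) := fun T =>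
    (constAttrs_self.mono_right Finset.inter_subset_right).mono_left Finset.inter_subset_right
  have hX := const _ _ _ (hC X) h
  rw [Finset.union_comm, Finset.sdiff_union_inter] at hX
  have hY := const _ _ _ (hC Y) (symm _ _ hX)
  rw [Finset.union_comm, Finset.sdiff_union_inter] at hY
  exact symm _ _ hY

end DerivPIA

end Derivation

section Counterexample

variable {Attr : Type} [DecidableEq Attr] {S : Schema Attr} {U V : Finset Attr}

noncomputable def indicatorTuple (S : Schema Attr) (s : Finset Attr) : Tuple S :=
  fun A => if A ∈ s then S.val₁ A else S.val₀ A

theorem indicatorTuple_ne_null (s : Finset Attr) (A : Attr) :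
    indicatorTuple S s A ≠ S.null A := by
  by_cases h : A ∈ s <;> simp [indicatorTuple, h, S.val₀_ne_null, S.val₁_ne_null]

theorem indicatorTuple_apply_eq_iff {s s' : Finset Attr} {A : Attr} :
    indicatorTuple S s A = indicatorTuple S s' A ↔ (A ∈ s ↔ A ∈ s') := by
  by_cases h : A ∈ s <;> by_cases h' : A ∈ s' <;>
    simp [indicatorTuple, h, h', S.val₀_ne_val₁, (S.val₀_ne_val₁ A).symm]

theorem agreeOn_indicatorTuple_iff {W s s' : Finset Attr} :
    agreeOn S W (indicatorTuple S s) (indicatorTuple S s') ↔ s ∩ W = s' ∩ W := by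
  simp only [agreeOn, indicatorTuple_apply_eq_iff, Finset.ext_iff, Finset.mem_inter]
  exact forall_congr' fun A => by by_cases hA : A ∈ W <;> simp [hA]

theorem satIA_map_indicatorTuple_iff {F : Multiset (Finset Attr)} :
    satIA S (F.map (indicatorTuple S)) U V ↔
      ∀ s₁ ∈ F, ∀ s₂ ∈ F, ∃ m ∈ F, m ∩ U = s₁ ∩ U ∧ m ∩ V = s₂ ∩ V := by
  simp only [satIA, completeOn, Multiset.forall_mem_map_iff]
  simp only [Multiset.mem_map, exists_exists_and_eq_and, agreeOn_indicatorTuple_iff]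
  exact and_iff_right fun s _ A _ => indicatorTuple_ne_null (S := S) s A

theorem not_impliesPIA_of_mem_inter {Γ : Finset (Finset Attr × Finset Attr)} {X Y : Finset Attr}
    {A : Attr} (hX : A ∈ X) (hY : A ∈ Y) (hΓ : ∀ p ∈ Γ, A ∉ p.1 ∩ p.2) :
    ¬ impliesPIA S Γ X Y := by
  let F : Multiset (Finset Attr) := {∅, {A}}
  have hsat : ∀ U V, satPIA S (F.map (indicatorTuple S)) U V ↔
      ∀ s₁ ∈ F, ∀ s₂ ∈ F, ∃ m ∈ F, m ∩ U = s₁ ∩ U ∧ m ∩ V = s₂ ∩ V := fun U V => by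
    rw [satPIA_iff_satIA_of_complete (by simp [indicatorTuple_ne_null]),
      satIA_map_indicatorTuple_iff]
  intro h
  have hXY := (hsat X Y).1 (h _ fun p hp => (hsat _ _).2 fun s₁ h₁ s₂ h₂ => ?_)
  · obtain ⟨m, -, hmX, hmY⟩ := hXY ∅ (by simp [F]) {A} (by simp [F])
    have : A ∈ m ∩ Y := by simp [hmY, hY]
    simpa [hmX] using Finset.mem_inter.2 ⟨(Finset.mem_inter.1 this).1, hX⟩
  · have hF : ∀ s ∈ F, ∀ W : Finset Attr, A ∉ W → s ∩ W = ∅ := by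
      simpa [F] using fun W => Finset.singleton_inter_of_notMem
    by_cases hA : A ∈ p.1
    · have hA₂ : A ∉ p.2 := fun h => hΓ p hp (Finset.mem_inter.2 ⟨hA, h⟩)
      exact ⟨s₁, h₁, rfl, by rw [hF s₁ h₁ _ hA₂, hF s₂ h₂ _ hA₂]⟩
    · exact ⟨s₂, h₂, by rw [hF s₁ h₁ _ hA, hF s₂ h₂ _ hA], rfl⟩

end Counterexample

section Separating

variable {Attr : Type} [DecidableEq Attr] {S : Schema Attr} {U V g₁ g₂ : Finset Attr}

noncomputable def wildcard (S : Schema Attr) (z : Attr) : Tuple S :=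
  Function.update S.null z (S.val₀ z)

theorem groundsTuple_wildcard_iff {t : Tuple S} {z : Attr} :
    groundsTuple S t (wildcard S z) ↔ (∀ A, t A ≠ S.null A) ∧ t z = S.val₀ z := by
  refine and_congr_right fun _ => ⟨fun h => ?_, fun h A hA => ?_⟩
  · simpa [wildcard] using h z (by simpa [wildcard] using S.val₀_ne_null z)
  · by_cases hAz : A = z
    · subst hAz
      simpa [wildcard] using h
    · simp [wildcard, hAz] at hA

/-- Each wildcard occurs twice, so that the two mixed tuples required by an atom can both be
grounded from wildcards at the same attribute. -/
noncomputable def separatingRel (S : Schema Attr) (g₁ g₂ : Finset Attr) : DBRel S :=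
  indicatorTuple S g₁ ::ₘ indicatorTuple S g₂ ::ₘ 2 • (g₁ ∪ g₂).val.map (wildcard S)

theorem not_satPIA_separatingRel {X Y : Finset Attr} (hdisj : Disjoint g₁ g₂)
    (h₁ : g₁.Nonempty) (h₂ : g₂.Nonempty) (hX : g₁ ⊆ X) (hY : g₂ ⊆ Y) :
    ¬ satPIA S (separatingRel S g₁ g₂) X Y := by
  rintro ⟨r', hg, -, hcross⟩
  have hmem : ∀ s, indicatorTuple S s ∈ separatingRel S g₁ g₂ → indicatorTuple S s ∈ r' :=
    fun s hs => mem_of_grounds hg hs (indicatorTuple_ne_null s)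
  obtain ⟨c, hc, hcX, hcY⟩ := hcross _ (hmem g₁ (by simp [separatingRel]))
    _ (hmem g₂ (by simp [separatingRel]))
  have hc₁ : ∀ A ∈ g₁ ∪ g₂, c A = S.val₁ A := by
    intro A hA
    rcases Finset.mem_union.1 hA with hA | hA
    · simpa [indicatorTuple, hA] using hcX A (hX hA)
    · simpa [indicatorTuple, hA] using hcY A (hY hA)
  obtain ⟨t, ht, hct⟩ := Multiset.exists_mem_of_rel_of_mem hg hc
  obtain ⟨A, hA, hcA⟩ : ∃ A ∈ g₁ ∪ g₂, c A = S.val₀ A := by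
    simp only [separatingRel, Multiset.mem_cons, Multiset.mem_nsmul, Multiset.mem_map] at ht
    rcases ht with rfl | rfl | ⟨-, z, hz, rfl⟩
    · obtain ⟨y, hy⟩ := h₂
      refine ⟨y, Finset.mem_union_right _ hy, ?_⟩
      simp [eq_of_groundsTuple hct (indicatorTuple_ne_null _), indicatorTuple,
        Finset.disjoint_right.1 hdisj hy]
    · obtain ⟨x, hx⟩ := h₁
      refine ⟨x, Finset.mem_union_left _ hx, ?_⟩
      simp [eq_of_groundsTuple hct (indicatorTuple_ne_null _), indicatorTuple,
        Finset.disjoint_left.1 hdisj hx]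
    · exact ⟨z, hz, (groundsTuple_wildcard_iff.1 hct).2⟩
  exact S.val₀_ne_val₁ A (hcA.symm.trans (hc₁ A hA))

theorem exists_grounds_separatingRel {m₁ m₂ : Finset Attr} (hdisj : Disjoint g₁ g₂)
    (hm₁ : ¬ g₁ ∪ g₂ ⊆ m₁) (hm₂ : ¬ g₁ ∪ g₂ ⊆ m₂) :
    ∃ F : Multiset (Finset Attr), grounds S (F.map (indicatorTuple S)) (separatingRel S g₁ g₂) ∧
      ∀ s, s ∈ F ↔ s = g₁ ∨ s = g₂ ∨ s = m₁ ∨ s = m₂ := by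
  let pick (m : Finset Attr) (z : Attr) : Finset Attr :=
    if z ∉ m then m else if z ∈ g₁ then g₂ else g₁
  have notMem_pick : ∀ m z, z ∉ pick m z := fun m z => by
    by_cases h : z ∈ m <;> by_cases h' : z ∈ g₁ <;>
      simp [pick, h, h', Finset.disjoint_left.1 hdisj]
  have mem_map_pick : ∀ m, ¬ g₁ ∪ g₂ ⊆ m → m ∈ (g₁ ∪ g₂).val.map (pick m) := fun m hm => by
    obtain ⟨z, hz, hzm⟩ := Finset.not_subset.1 hm
    exact Multiset.mem_map.2 ⟨z, hz, if_pos hzm⟩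
  refine ⟨g₁ ::ₘ g₂ ::ₘ ((g₁ ∪ g₂).val.map (pick m₁) + (g₁ ∪ g₂).val.map (pick m₂)), ?_,
    fun s => ?_⟩
  · simp only [separatingRel, grounds, Multiset.map_cons, Multiset.map_add, Multiset.map_map,
      two_nsmul]
    refine .cons (groundsTuple_self (indicatorTuple_ne_null g₁))
      (.cons (groundsTuple_self (indicatorTuple_ne_null g₂)) (.add ?_ ?_)) <;>
    exact Multiset.rel_map.2 (Multiset.rel_refl_of_refl_on fun z _ =>
      groundsTuple_wildcard_iff.2 ⟨indicatorTuple_ne_null _, by simp [indicatorTuple, notMem_pick]⟩)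
  · constructor
    · simp only [Multiset.mem_cons, Multiset.mem_add, Multiset.mem_map]
      rintro (rfl | rfl | ⟨z, -, rfl⟩ | ⟨z, -, rfl⟩)
      · exact Or.inl rfl
      · exact Or.inr (Or.inl rfl)
      all_goals simp only [pick]; split_ifs <;> simp
    · rintro (rfl | rfl | rfl | rfl)
      · simp
      · simp
      · exact Multiset.mem_cons_of_mem (Multiset.mem_cons_of_mem
          (Multiset.mem_add.2 (Or.inl (mem_map_pick _ hm₁))))
      · exact Multiset.mem_cons_of_mem (Multiset.mem_cons_of_mem
          (Multiset.mem_add.2 (Or.inr (mem_map_pick _ hm₂))))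

theorem satIA_map_indicatorTuple_of_mixed {F : Multiset (Finset Attr)} {m₁ m₂ : Finset Attr}
    (hF : ∀ s, s ∈ F ↔ s = g₁ ∨ s = g₂ ∨ s = m₁ ∨ s = m₂)
    (hm₁ : m₁ ∩ U = g₁ ∩ U ∧ m₁ ∩ V = g₂ ∩ V) (hm₂ : m₂ ∩ U = g₂ ∩ U ∧ m₂ ∩ V = g₁ ∩ V) :
    satIA S (F.map (indicatorTuple S)) U V := by
  rw [satIA_map_indicatorTuple_iff]
  have hU : ∀ s ∈ F, s ∩ U = g₁ ∩ U ∨ s ∩ U = g₂ ∩ U := fun s hs => by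
    rcases (hF s).1 hs with rfl | rfl | rfl | rfl <;> simp [hm₁, hm₂]
  have hV : ∀ s ∈ F, s ∩ V = g₁ ∩ V ∨ s ∩ V = g₂ ∩ V := fun s hs => by
    rcases (hF s).1 hs with rfl | rfl | rfl | rfl <;> simp [hm₁, hm₂]
  intro s₁ h₁ s₂ h₂
  rcases hU s₁ h₁ with e₁ | e₁ <;> rcases hV s₂ h₂ with e₂ | e₂
  · exact ⟨g₁, by simp [hF], e₁.symm, e₂.symm⟩
  · exact ⟨m₁, by simp [hF], hm₁.1.trans e₁.symm, hm₁.2.trans e₂.symm⟩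
  · exact ⟨m₂, by simp [hF], hm₂.1.trans e₁.symm, hm₂.2.trans e₂.symm⟩
  · exact ⟨g₂, by simp [hF], e₁.symm, e₂.symm⟩

theorem satPIA_separatingRel (hdisj : Disjoint g₁ g₂) (hUV : Disjoint (U ∩ V) (g₁ ∪ g₂))
    (h₁₂ : ¬ (g₁ ⊆ U ∧ g₂ ⊆ V)) (h₂₁ : ¬ (g₂ ⊆ U ∧ g₁ ⊆ V)) :
    satPIA S (separatingRel S g₁ g₂) U V := by
  have hg₁₂ : ∀ A ∈ g₁, A ∉ g₂ := Finset.disjoint_left.1 hdisj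
  have hUV' : ∀ A ∈ U, A ∈ V → A ∉ g₁ ∧ A ∉ g₂ := fun A hU hV => by
    simpa using Finset.disjoint_left.1 hUV (Finset.mem_inter.2 ⟨hU, hV⟩)
  have hm₁ : ¬ g₁ ∪ g₂ ⊆ U ∩ g₁ ∪ V ∩ g₂ := fun h => h₁₂ (by
    simp only [Finset.subset_iff, Finset.mem_union, Finset.mem_inter] at h ⊢; grind)
  have hm₂ : ¬ g₁ ∪ g₂ ⊆ U ∩ g₂ ∪ V ∩ g₁ := fun h => h₂₁ (by
    simp only [Finset.subset_iff, Finset.mem_union, Finset.mem_inter] at h ⊢; grind)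
  obtain ⟨F, hgr, hF⟩ := exists_grounds_separatingRel (S := S) hdisj hm₁ hm₂
  refine ⟨_, hgr, satIA_map_indicatorTuple_of_mixed hF ⟨?_, ?_⟩ ⟨?_, ?_⟩⟩ <;>
    ext A <;> simp only [Finset.mem_union, Finset.mem_inter] <;> grind

end Separating

section Completeness

variable {Attr : Type} [DecidableEq Attr] {S : Schema Attr} {Γ : Finset (Finset Attr × Finset Attr)}
  {X Y : Finset Attr}

theorem not_impliesPIA_of_separated {g₁ g₂ : Finset Attr} (hdisj : Disjoint g₁ g₂)
    (h₁ : g₁.Nonempty) (h₂ : g₂.Nonempty) (hX : g₁ ⊆ X) (hY : g₂ ⊆ Y)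
    (hΓ : ∀ p ∈ Γ, Disjoint (p.1 ∩ p.2) (g₁ ∪ g₂) ∧ ¬ (g₁ ⊆ p.1 ∧ g₂ ⊆ p.2) ∧
      ¬ (g₂ ⊆ p.1 ∧ g₁ ⊆ p.2)) :
    ¬ impliesPIA S Γ X Y := fun h =>
  not_satPIA_separatingRel hdisj h₁ h₂ hX hY <| h _ fun p hp =>
    satPIA_separatingRel hdisj (hΓ p hp).1 (hΓ p hp).2.1 (hΓ p hp).2.2

theorem derivPIA_of_impliesPIA (h : impliesPIA S Γ X Y) : DerivPIA Γ X Y := by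
  set C := constAttrs Γ
  apply DerivPIA.of_sdiff_constAttrs
  by_contra hd
  have hX : (X \ C).Nonempty := Finset.nonempty_iff_ne_empty.2 fun he =>
    hd (he ▸ DerivPIA.symm _ _ (DerivPIA.triv _))
  have hY : (Y \ C).Nonempty := Finset.nonempty_iff_ne_empty.2 fun he => hd (he ▸ DerivPIA.triv _)
  by_cases hXY : Disjoint (X \ C) (Y \ C)
  · refine not_impliesPIA_of_separated hXY hX hY Finset.sdiff_subset Finset.sdiff_subset
      (fun p hp => ⟨?_, fun hs => hd (DerivPIA.of_subset_mem hp hs.1 hs.2),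
        fun hs => hd (DerivPIA.symm _ _ (DerivPIA.of_subset_mem hp hs.1 hs.2))⟩) h
    exact Finset.disjoint_of_subset_left (inter_subset_constAttrs hp)
      (Finset.disjoint_union_right.2 ⟨Finset.disjoint_sdiff, Finset.disjoint_sdiff⟩)
  · obtain ⟨A, hAX, hAY⟩ := Finset.not_disjoint_iff.1 hXY
    exact not_impliesPIA_of_mem_inter (Finset.mem_sdiff.1 hAX).1 (Finset.mem_sdiff.1 hAY).1
      (fun p hp hA => (Finset.mem_sdiff.1 hAX).2 (inter_subset_constAttrs hp hA)) h

end Completeness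

theorem pia_axiomatisation_sound_and_complete_for_PIAstar_general (S : Schema Attr) :
    (∀ (Γ : Finset (Finset Attr × Finset Attr)) (X Y : Finset Attr),
      DerivPIA Γ X Y → impliesPIA S Γ X Y) ∧
    (∀ (Γ : Finset (Finset Attr × Finset Attr)) (X Y : Finset Attr), PIAstar X Y →
      (impliesPIA S Γ X Y ↔ DerivPIA Γ X Y)) :=
  ⟨fun _ _ _ => impliesPIA_of_derivPIA,
    fun _ _ _ _ => ⟨derivPIA_of_impliesPIA, impliesPIA_of_derivPIA⟩⟩

/-- The rule set 𝔍_p is sound for all PIAs, and sound and complete for the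
(PIA, PIA*)-implication problem. -/
theorem pia_axiomatisation_sound_and_complete_for_PIAstar [Fintype Attr] (S : Schema Attr) :
    (∀ (Γ : Finset (Finset Attr × Finset Attr)) (X Y : Finset Attr),
      DerivPIA Γ X Y → impliesPIA S Γ X Y) ∧
    (∀ (Γ : Finset (Finset Attr × Finset Attr)) (X Y : Finset Attr), PIAstar X Y →
      (impliesPIA S Γ X Y ↔ DerivPIA Γ X Y)) :=
  pia_axiomatisation_sound_and_complete_for_PIAstar_general S
end

section
/- Over the relation schema R = {A, B, C} with three distinct attributes, the set {A⊥_c C, B⊥_c C} does not logically imply AB⊥_c C: there exists a relation over R that satisfies A⊥_c C and B⊥_c C but does not satisfy AB⊥_c C. -/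
variable {Attr : Type} [DecidableEq Attr]

/-- Build a tuple over a schema on `Fin 3` from three values. -/
def mkT (S : Schema (Fin 3)) (x : S.Dom 0) (y : S.Dom 1) (z : S.Dom 2) : Tuple S
  | ⟨0, _⟩ => x
  | ⟨1, _⟩ => y
  | ⟨2, _⟩ => z

omit [DecidableEq Attr] in
lemma groundsTuple_of_complete {S : Schema Attr} {t' t : Tuple S}
    (hc : ∀ A, t A ≠ S.null A) (h : groundsTuple S t' t) : t' = t :=
  funext fun A => h.2 A (hc A)

omit [DecidableEq Attr] in
lemma grounds_eq_of_complete {S : Schema Attr} {r' r : DBRel S}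
    (hc : ∀ t ∈ r, ∀ A, t A ≠ S.null A) (h : grounds S r' r) : r' = r := by
  rw [← Multiset.rel_eq]
  exact h.mono fun a ha b hb hab => groundsTuple_of_complete (hc b hb) hab

omit [DecidableEq Attr] in
lemma grounds_self_of_complete {S : Schema Attr} {r : DBRel S}
    (hc : ∀ t ∈ r, ∀ A, t A ≠ S.null A) : grounds S r r :=
  Multiset.rel_refl_of_refl_on fun t ht => ⟨hc t ht, fun _ _ => rfl⟩

/-- Over the schema R = {A, B, C} (A = 0, B = 1, C = 2), the set {A ⊥_c C, B ⊥_c C}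
does not logically imply AB ⊥_c C: there exists a relation over R satisfying
A ⊥_c C and B ⊥_c C but not AB ⊥_c C. -/
theorem cia_no_constancy_free_composition (S : Schema (Fin 3)) :
    ∃ r : DBRel S, satCIA S r {0} {2} ∧ satCIA S r {1} {2} ∧
      ¬ satCIA S r ({0} ∪ {1}) {2} := by

  obtain ⟨a, a', ha, ha', haa⟩ := S.two_nonnull 0
  obtain ⟨b, b', hb, hb', hbb⟩ := S.two_nonnull 1
  obtain ⟨c, c', hc, hc', hcc⟩ := S.two_nonnull 2
  set t1 := mkT S a b c with ht1
  set t2 := mkT S a b' c' with ht2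
  set t3 := mkT S a' b c' with ht3
  set t4 := mkT S a' b' c with ht4
  set r : DBRel S := {t1, t2, t3, t4} with hr
  have hmem : ∀ t, t ∈ r ↔ t = t1 ∨ t = t2 ∨ t = t3 ∨ t = t4 := by
    intro t
    simp [hr, Multiset.insert_eq_cons]
  have hcomp : ∀ t ∈ r, ∀ A, t A ≠ S.null A := by
    intro t ht A
    rw [hmem] at ht
    fin_cases A <;> rcases ht with h | h | h | h <;> subst h <;>
      simp only [ht1, ht2, ht3, ht4] <;>
      (first
      | exact ha
      | exact ha'
      | exact hb
      | exact hb'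
      | exact hc
      | exact hc')
  have key : ∀ X Y : Finset (Fin 3),
      (∀ u1 ∈ r, ∀ u2 ∈ r, ∃ t ∈ r, agreeOn S X t u1 ∧ agreeOn S Y t u2) →
      satCIA S r X Y := by
    intro X Y h r' hr'
    rw [grounds_eq_of_complete hcomp hr']
    exact ⟨fun t ht A _ => hcomp t ht A, h⟩
  have mem1 : t1 ∈ r := (hmem t1).mpr (Or.inl rfl)
  have mem2 : t2 ∈ r := (hmem t2).mpr (Or.inr (Or.inl rfl))
  have mem3 : t3 ∈ r := (hmem t3).mpr (Or.inr (Or.inr (Or.inl rfl)))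
  have mem4 : t4 ∈ r := (hmem t4).mpr (Or.inr (Or.inr (Or.inr rfl)))
  refine ⟨r, ?_, ?_, ?_⟩
  · refine key _ _ ?_
    intro u1 hu1 u2 hu2
    rw [hmem] at hu1 hu2
    rcases hu1 with h | h | h | h <;> rcases hu2 with g | g | g | g <;> subst h <;> subst g <;>
      (first
      | (refine ⟨t1, mem1, ?_, ?_⟩ <;> (intro A hA; fin_cases hA <;> rfl))
      | (refine ⟨t2, mem2, ?_, ?_⟩ <;> (intro A hA; fin_cases hA <;> rfl))
      | (refine ⟨t3, mem3, ?_, ?_⟩ <;> (intro A hA; fin_cases hA <;> rfl))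
      | (refine ⟨t4, mem4, ?_, ?_⟩ <;> (intro A hA; fin_cases hA <;> rfl)))
  · refine key _ _ ?_
    intro u1 hu1 u2 hu2
    rw [hmem] at hu1 hu2
    rcases hu1 with h | h | h | h <;> rcases hu2 with g | g | g | g <;> subst h <;> subst g <;>
      (first
      | (refine ⟨t1, mem1, ?_, ?_⟩ <;> (intro A hA; fin_cases hA <;> rfl))
      | (refine ⟨t2, mem2, ?_, ?_⟩ <;> (intro A hA; fin_cases hA <;> rfl))
      | (refine ⟨t3, mem3, ?_, ?_⟩ <;> (intro A hA; fin_cases hA <;> rfl))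
      | (refine ⟨t4, mem4, ?_, ?_⟩ <;> (intro A hA; fin_cases hA <;> rfl)))
  · intro hbad
    obtain ⟨-, hpairs⟩ := hbad r (grounds_self_of_complete hcomp)
    obtain ⟨t, ht, hX, hY⟩ := hpairs t1 mem1 t2 mem2
    have h0 : t 0 = a := hX 0 (by decide)
    have h1 : t 1 = b := hX 1 (by decide)
    have h2 : t 2 = c' := hY 2 (by decide)
    rw [hmem] at ht
    rcases ht with h | h | h | h <;> subst h
    · exact hcc h2
    · exact hbb h1.symm
    · exact haa h0.symm
    · exact haa h0.symm
end
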